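/- Let (X,‖·‖,τ) be a complete Saks space with mixed topology γ, Γ_γ a norming directed system of continuous seminorms generating γ, and (A,D(A)) a γ-densely defined, Γ_γ-dissipative linear operator on X. Assume Ran(λ−A) is γ-dense in X for some λ>0. Then the γ-strongly continuous, γ-equicontinuous semigroup (T(t))_{t≥0} generated by the γ-closure of A is a contraction semigroup, i.e. ‖T(t)‖ ≤ 1 for all t≥0. -/

import Mathlib

open Filter Topology Set

namespace LumerPhillips

variable {X : Type*}

section Defs

variable [NormedAddCommGroup X] [NormedSpace ℝ X]

/-- A directed set of seminorms. -/
def DirectedSeminorms (Γ : Set (Seminorm ℝ X)) : Prop :=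
  ∀ p ∈ Γ, ∀ q ∈ Γ, ∃ r ∈ Γ, p ≤ r ∧ q ≤ r

/-- `Γ` is a system of `t`-continuous seminorms generating the topology `t`, i.e. `t` is
the locally convex topology induced by the seminorms in `Γ`. -/
def GeneratesTop (Γ : Set (Seminorm ℝ X)) (t : TopologicalSpace X) : Prop :=
  (∀ p ∈ Γ, @Continuous X ℝ t _ p) ∧
    t = ⨅ p : Γ,
      (p : Seminorm ℝ X).toSeminormedAddCommGroup.toUniformSpace.toTopologicalSpace

/-- `Γ` is norming: the norm is the pointwise supremum of the seminorms in `Γ`. -/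
def NormingSeminorms (Γ : Set (Seminorm ℝ X)) : Prop :=
  ∀ x : X, ‖x‖ = ⨆ p : Γ, (p : Seminorm ℝ X) x

/-- `(X,‖·‖,τ)` is a Saks space witnessed by the norming directed system `Γ` of τ-continuous
seminorms generating `τ`; `τ` is a Hausdorff locally convex topology coarser than the norm
topology. -/
def IsSaksSystem (τ : TopologicalSpace X) (Γ : Set (Seminorm ℝ X)) : Prop :=
  @T2Space X τ ∧ @LocallyConvexSpace ℝ X _ _ _ _ τ ∧
    (inferInstance : TopologicalSpace X) ≤ τ ∧
    DirectedSeminorms Γ ∧ GeneratesTop Γ τ ∧ NormingSeminorms Γ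

/-- `t` is a linear (vector space) topology on `X`. -/
def IsLinearTop (t : TopologicalSpace X) : Prop :=
  @IsTopologicalAddGroup X t _ ∧ @ContinuousSMul ℝ X _ _ t

/-- The topologies `t` and `s` agree (as subspace topologies) on every norm-bounded set. -/
def AgreeOnBoundedSets (t s : TopologicalSpace X) : Prop :=
  ∀ S : Set X, Bornology.IsBounded S →
    TopologicalSpace.induced ((↑) : S → X) t = TopologicalSpace.induced ((↑) : S → X) s

/-- `γ` is the mixed topology `γ(‖·‖,τ)`: the finest linear topology that agrees with `τ` on
norm-bounded sets and lies between `τ` and the norm topology. (Recall that in Mathlib's order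
on topologies, `t ≤ s` means `t` is finer than `s`.) -/
def IsMixedTopology (τ γ : TopologicalSpace X) : Prop :=
  (IsLinearTop γ ∧ γ ≤ τ ∧ (inferInstance : TopologicalSpace X) ≤ γ ∧ AgreeOnBoundedSets γ τ) ∧
    ∀ t : TopologicalSpace X, IsLinearTop t → t ≤ τ →
      (inferInstance : TopologicalSpace X) ≤ t → AgreeOnBoundedSets t τ → γ ≤ t

/-- `u` is a Cauchy sequence for the (group) topology `t`. -/
def CauchySeqTop (t : TopologicalSpace X) (u : ℕ → X) : Prop :=
  ∀ V ∈ @nhds X t 0, ∃ N : ℕ, ∀ m ≥ N, ∀ n ≥ N, u m - u n ∈ V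

/-- `(X,t)` is sequentially complete. -/
def SeqCompleteTop (t : TopologicalSpace X) : Prop :=
  ∀ u : ℕ → X, CauchySeqTop t u → ∃ x : X, Filter.Tendsto u atTop (@nhds X t x)

/-- `(X,t)` is complete (every Cauchy filter for the group uniformity of `t` converges). -/
def CompleteTop (t : TopologicalSpace X) : Prop :=
  ∀ F : Filter X, F.NeBot →
    (∀ V ∈ @nhds X t 0, ∃ S ∈ F, ∀ x ∈ S, ∀ y ∈ S, x - y ∈ V) →
    ∃ x : X, F ≤ @nhds X t x

/-- The map `λ - A` on the domain `D` of the linear operator `A`. -/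
def lmap (D : Submodule ℝ X) (A : D →ₗ[ℝ] X) (l : ℝ) : D → X :=
  fun x => l • (x : X) - A x

/-- The operator `(A, D)` is `Γ`-dissipative: `p((λ - A)x) ≥ λ p(x)` for all `λ > 0`,
`x ∈ D` and `p ∈ Γ`. -/
def GammaDissipative (Γ : Set (Seminorm ℝ X)) (D : Submodule ℝ X) (A : D →ₗ[ℝ] X) : Prop :=
  ∀ l : ℝ, 0 < l → ∀ x : D, ∀ p ∈ Γ, l * p (x : X) ≤ p (lmap D A l x)

/-- The range of `λ - A`. -/
def opRange (D : Submodule ℝ X) (A : D →ₗ[ℝ] X) (l : ℝ) : Set X :=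
  Set.range (lmap D A l)

/-- The graph of the operator `(A, D)`. -/
def graphSet (D : Submodule ℝ X) (A : D →ₗ[ℝ] X) : Set (X × X) :=
  {p : X × X | ∃ x : D, p = ((x : X), A x)}

/-- The operator `(A, D)` is `t`-closed (equivalently: its graph is closed for the product
topology, which is the net formulation of closedness). -/
def ClosedOp (t : TopologicalSpace X) (D : Submodule ℝ X) (A : D →ₗ[ℝ] X) : Prop :=
  @IsClosed (X × X) (@instTopologicalSpaceProd X X t t) (graphSet D A)

/-- The operator `(A, D)` is sequentially `t`-closed. -/
def SeqClosedOp (t : TopologicalSpace X) (D : Submodule ℝ X) (A : D →ₗ[ℝ] X) : Prop :=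
  ∀ (u : ℕ → D) (x y : X),
    Filter.Tendsto (fun n => (u n : X)) atTop (@nhds X t x) →
    Filter.Tendsto (fun n => A (u n)) atTop (@nhds X t y) →
    ∃ hx : x ∈ D, A ⟨x, hx⟩ = y

/-- `(A', D')` is an extension of `(A, D)`. -/
def ExtensionOp (D : Submodule ℝ X) (A : D →ₗ[ℝ] X)
    (D' : Submodule ℝ X) (A' : D' →ₗ[ℝ] X) : Prop :=
  ∃ h : D ≤ D', ∀ x : D, A' ⟨(x : X), h x.2⟩ = A x

/-- `(A', D')` is the `t`-closure of `(A, D)`: the smallest `t`-closed extension. -/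
def IsClosureOp (t : TopologicalSpace X) (D : Submodule ℝ X) (A : D →ₗ[ℝ] X)
    (D' : Submodule ℝ X) (A' : D' →ₗ[ℝ] X) : Prop :=
  ExtensionOp D A D' A' ∧ ClosedOp t D' A' ∧
    ∀ (D'' : Submodule ℝ X) (A'' : D'' →ₗ[ℝ] X),
      ExtensionOp D A D'' A'' → ClosedOp t D'' A'' → ExtensionOp D' A' D'' A''

/-- `T` is a semigroup of linear operators which is strongly continuous for the topology `t`. -/
def IsSemigroupOn (t : TopologicalSpace X) (T : ℝ → X →ₗ[ℝ] X) : Prop :=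
  T 0 = LinearMap.id ∧ (∀ s u : ℝ, 0 ≤ s → 0 ≤ u → T (s + u) = (T s).comp (T u)) ∧
    ∀ x : X, @ContinuousOn ℝ X _ t (fun s => T s x) (Set.Ici 0)

/-- `T` is equicontinuous with respect to the system of seminorms `Γ`. -/
def EquicontOn (Γ : Set (Seminorm ℝ X)) (T : ℝ → X →ₗ[ℝ] X) : Prop :=
  ∀ p ∈ Γ, ∃ q ∈ Γ, ∃ C : ℝ, 0 ≤ C ∧ ∀ s : ℝ, 0 ≤ s → ∀ x : X, p (T s x) ≤ C * q x

/-- `T` is a contraction semigroup: `‖T(t)‖ ≤ 1` for all `t ≥ 0`. -/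
def ContractionSG (T : ℝ → X →ₗ[ℝ] X) : Prop :=
  ∀ s : ℝ, 0 ≤ s → ∀ x : X, ‖T s x‖ ≤ ‖x‖

/-- `T` is `(‖·‖,τ)`-equitight with respect to the system of seminorms `Γτ` generating `τ`. -/
def EquitightSG (Γτ : Set (Seminorm ℝ X)) (T : ℝ → X →ₗ[ℝ] X) : Prop :=
  ∀ ε : ℝ, 0 < ε → ∀ p ∈ Γτ, ∃ q ∈ Γτ, ∃ C : ℝ, 0 ≤ C ∧
    ∀ s : ℝ, 0 ≤ s → ∀ x : X, p (T s x) ≤ C * q x + ε * ‖x‖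

/-- `T` is a `τ`-bi-continuous semigroup. -/
def IsBiContSG (τ : TopologicalSpace X) (T : ℝ → X →ₗ[ℝ] X) : Prop :=
  IsSemigroupOn τ T ∧
    (∃ M : ℝ, 1 ≤ M ∧ ∃ ω : ℝ, ∀ s : ℝ, 0 ≤ s → ∀ x : X,
      ‖T s x‖ ≤ M * Real.exp (ω * s) * ‖x‖) ∧
    ∀ (x : ℕ → X) (x₀ : X), (∃ C : ℝ, ∀ n, ‖x n‖ ≤ C) →
      Filter.Tendsto x atTop (@nhds X τ x₀) →
      ∀ t₀ : ℝ, 0 < t₀ → ∀ V ∈ @nhds X τ 0,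
        ∃ N : ℕ, ∀ n ≥ N, ∀ s ∈ Set.Icc (0 : ℝ) t₀, T s (x n - x₀) ∈ V

/-- `(A, D)` is the generator of the `τ`-bi-continuous semigroup `T`. -/
def IsGeneratorBi (τ : TopologicalSpace X) (T : ℝ → X →ₗ[ℝ] X)
    (D : Submodule ℝ X) (A : D →ₗ[ℝ] X) : Prop :=
  (∀ x : X, x ∈ D ↔
      ((∃ y : X, Filter.Tendsto (fun s : ℝ => s⁻¹ • (T s x - x)) (𝓝[>] (0 : ℝ))
          (@nhds X τ y)) ∧
        ∃ C : ℝ, ∀ s ∈ Set.Ioc (0 : ℝ) 1, ‖T s x - x‖ ≤ C * s)) ∧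
    ∀ x : D, Filter.Tendsto (fun s : ℝ => s⁻¹ • (T s (x : X) - (x : X))) (𝓝[>] (0 : ℝ))
      (@nhds X τ (A x))

/-- `(A, D)` is the generator of the `t`-strongly continuous semigroup `T` (locally convex
setting). -/
def IsGeneratorLC (t : TopologicalSpace X) (T : ℝ → X →ₗ[ℝ] X)
    (D : Submodule ℝ X) (A : D →ₗ[ℝ] X) : Prop :=
  (∀ x : X, x ∈ D ↔
      ∃ y : X, Filter.Tendsto (fun s : ℝ => s⁻¹ • (T s x - x)) (𝓝[>] (0 : ℝ)) (@nhds X t y)) ∧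
    ∀ x : D, Filter.Tendsto (fun s : ℝ => s⁻¹ • (T s (x : X) - (x : X))) (𝓝[>] (0 : ℝ))
      (@nhds X t (A x))

/-- `D` is bi-dense in `X`: every point is the `τ`-limit of a norm-bounded sequence in `D`. -/
def BiDenselyDefined (τ : TopologicalSpace X) (D : Submodule ℝ X) : Prop :=
  ∀ x : X, ∃ u : ℕ → D, (∃ C : ℝ, ∀ n, ‖(u n : X)‖ ≤ C) ∧
    Filter.Tendsto (fun n => (u n : X)) atTop (@nhds X τ x)

/-- The seminorms `|||x||| = sup_n p_n(x) a_n` with `(p_n) ⊆ Γτ` and `(a_n)` a non-negative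
real null sequence; they generate the submixed topology `γ_s`. -/
def SubmixedSet (Γτ : Set (Seminorm ℝ X)) : Set (Seminorm ℝ X) :=
  {q : Seminorm ℝ X | ∃ (pn : ℕ → Seminorm ℝ X) (an : ℕ → ℝ),
      (∀ n, pn n ∈ Γτ) ∧ (∀ n, 0 ≤ an n) ∧ Filter.Tendsto an atTop (nhds 0) ∧
      ∀ x : X, q x = ⨆ n : ℕ, pn n x * an n}

/-- The subfamily of submixed seminorms with coefficients `0 ≤ a_n ≤ 1`. -/
def SubmixedSetOne (Γτ : Set (Seminorm ℝ X)) : Set (Seminorm ℝ X) :=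
  {q : Seminorm ℝ X | ∃ (pn : ℕ → Seminorm ℝ X) (an : ℕ → ℝ),
      (∀ n, pn n ∈ Γτ) ∧ (∀ n, 0 ≤ an n ∧ an n ≤ 1) ∧ Filter.Tendsto an atTop (nhds 0) ∧
      ∀ x : X, q x = ⨆ n : ℕ, pn n x * an n}

/-- The dual norm of a linear functional (as the supremum over the closed unit ball). -/
noncomputable def dualNormF (f : X →ₗ[ℝ] ℝ) : ℝ :=
  ⨆ x : {x : X // ‖x‖ ≤ 1}, |f x|

/-- The weak topology `σ(X, (X,t)')`. -/
def weakTopOf (t : TopologicalSpace X) : TopologicalSpace X :=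
  ⨅ f : {f : X →ₗ[ℝ] ℝ // @Continuous X ℝ t _ f},
    TopologicalSpace.induced (⇑f.1) inferInstance

/-- `(X,t)` is semi-reflexive: every `t`-(von Neumann-)bounded set is relatively compact
for the weak topology `σ(X,(X,t)')`. -/
def SemiReflexiveTop (t : TopologicalSpace X) : Prop :=
  ∀ S : Set X, @Bornology.IsVonNBounded ℝ X _ _ _ t S →
    @IsCompact X (weakTopOf t) (@closure X (weakTopOf t) S)

/-- A set is sequentially open for the topology `t`. -/
def SeqOpenSet (t : TopologicalSpace X) (s : Set X) : Prop :=
  ∀ (u : ℕ → X) (x : X), x ∈ s → Filter.Tendsto u atTop (@nhds X t x) →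
    ∀ᶠ n in atTop, u n ∈ s

/-- `(X,t)` is C-sequential: every convex sequentially open set is open. -/
def CSequentialTop (t : TopologicalSpace X) : Prop :=
  ∀ s : Set X, Convex ℝ s → SeqOpenSet t s → @IsOpen X t s

end Defs

/-!
Dissipativity is a closed condition on the graph, so it passes from `A` to its closure `A'`.
For `x ∈ D(A')` the orbit stays in `D(A')` with `A' T(t) x = T(t) A' x`, and dissipativity at
`λ = 1/h`, applied to `T(u+h) x`, gives `p(T(u+h) x) ≤ p(T(u) x) + C q(T(h)x - x - h T(h) A'x)`
by equicontinuity. The error term is `o(h)` uniformly in `u`, so `p(T(t) x) ≤ p(x)` by summing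
over `n` steps of length `t/n`. Density of `D(A')` extends this to all `x`, and the norming
property turns the seminorm bounds into `‖T(t) x‖ ≤ ‖x‖`.
-/

theorem apply_le_apply_zero_of_le_add_mul {φ δ : ℝ → ℝ} (hδ : Tendsto δ (𝓝[>] 0) (𝓝 0))
    (hφ : ∀ u, 0 ≤ u → ∀ h, 0 < h → φ (u + h) ≤ φ u + h * δ h) {s : ℝ} (hs : 0 ≤ s) :
    φ s ≤ φ 0 := by
  rcases hs.eq_or_lt with rfl | hs
  · rfl
  have hsteps : ∀ n : ℕ, ∀ h, 0 < h → φ (n * h) ≤ φ 0 + n * (h * δ h) := by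
    intro n h hh
    induction n with
    | zero => simp
    | succ n ih =>
      calc φ ((n + 1 : ℕ) * h) = φ (n * h + h) := by push_cast; ring_nf
        _ ≤ φ (n * h) + h * δ h := hφ _ (mul_nonneg n.cast_nonneg hh.le) h hh
        _ ≤ φ 0 + (n + 1 : ℕ) * (h * δ h) := by push_cast; linarith
  have hsn : Tendsto (fun n : ℕ => s / n) atTop (𝓝[>] 0) :=
    tendsto_nhdsWithin_iff.2 ⟨tendsto_const_div_atTop_nhds_zero_nat s,
      (eventually_gt_atTop 0).mono fun n hn => div_pos hs (Nat.cast_pos.2 hn)⟩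
  have hlim : Tendsto (fun n : ℕ => φ 0 + s * δ (s / n)) atTop (𝓝 (φ 0)) := by
    simpa using ((hδ.comp hsn).const_mul s).const_add (φ 0)
  refine ge_of_tendsto hlim ?_
  filter_upwards [eventually_gt_atTop 0] with n hn
  have hn : (0 : ℝ) < n := Nat.cast_pos.2 hn
  calc φ s = φ (n * (s / n)) := by rw [mul_div_cancel₀ s hn.ne']
    _ ≤ φ 0 + n * (s / n * δ (s / n)) := hsteps n _ (div_pos hs hn)
    _ = φ 0 + s * δ (s / n) := by field_simp

section Seminorm

variable {E : Type*} [AddCommGroup E] [Module ℝ E]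

theorem _root_.Seminorm.le_sub_smul_of_inv_mul_le {p : Seminorm ℝ E} {y z : E} {h : ℝ}
    (hh : 0 < h) (H : h⁻¹ * p y ≤ p (h⁻¹ • y - z)) :
    p y ≤ p (y - h • z) := by
  have hy : y - h • z = h • (h⁻¹ • y - z) := by
    rw [smul_sub, smul_inv_smul₀ hh.ne']
  rwa [hy, map_smul_eq_mul, Real.norm_of_nonneg hh.le, ← inv_mul_le_iff₀ hh]

theorem _root_.Seminorm.sub_sub_smul_le (q : Seminorm ℝ E) (x y a b : E) {h : ℝ} (hh : 0 < h) :
    q (y - x - h • b) ≤ h * (q (h⁻¹ • (y - x) - a) + q (b - a)) := by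
  have hyx : y - x - h • b = h • (h⁻¹ • (y - x) - a) - h • (b - a) := by
    rw [smul_sub, smul_inv_smul₀ hh.ne', smul_sub]
    abel
  calc q (y - x - h • b) ≤ q (h • (h⁻¹ • (y - x) - a)) + q (h • (b - a)) := by
        rw [hyx]; exact map_sub_le_add q _ _
    _ = h * (q (h⁻¹ • (y - x) - a) + q (b - a)) := by
        rw [map_smul_eq_mul, map_smul_eq_mul, Real.norm_of_nonneg hh.le, mul_add]

end Seminorm

section LinearPMap

variable {R E F : Type*} [CommRing R] [TopologicalSpace R] [AddCommGroup E] [AddCommGroup F]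
  [Module R E] [Module R F] [TopologicalSpace E] [TopologicalSpace F] [ContinuousAdd E]
  [ContinuousAdd F] [ContinuousSMul R E] [ContinuousSMul R F]

theorem _root_.LinearPMap.graph_eq_topologicalClosure_of_isLeast {f g : E →ₗ.[R] F}
    (hfg : f ≤ g) (hg : g.IsClosed) (hmin : ∀ h : E →ₗ.[R] F, f ≤ h → h.IsClosed → g ≤ h) :
    g.graph = f.graph.topologicalClosure := by
  have hf : f.IsClosable := hg.isClosable.leIsClosable hfg
  refine le_antisymm ?_ (f.graph.topologicalClosure_minimal (LinearPMap.le_graph_of_le hfg) hg)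
  rw [hf.graph_closure_eq_closure_graph]
  exact LinearPMap.le_graph_of_le (hmin _ f.le_closure hf.closure_isClosed)

end LinearPMap

section TopologicalVectorSpace

variable {E : Type*} [AddCommGroup E] [Module ℝ E] [TopologicalSpace E]

theorem _root_.LinearPMap.seminorm_le_of_graph_le_topologicalClosure [IsTopologicalAddGroup E]
    [ContinuousSMul ℝ E] {p : Seminorm ℝ E} (hp : Continuous p) {l : ℝ} {f g : E →ₗ.[ℝ] E}
    (hgf : g.graph ≤ f.graph.topologicalClosure)
    (hf : ∀ x : f.domain, l * p x ≤ p (l • (x : E) - f x)) (x : g.domain) :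
    l * p x ≤ p (l • (x : E) - g x) := by
  have hclosed : IsClosed {z : E × E | l * p z.1 ≤ p (l • z.1 - z.2)} :=
    isClosed_le (continuous_const.mul (hp.comp continuous_fst))
      (hp.comp ((continuous_fst.const_smul l).sub continuous_snd))
  have hsub : (f.graph : Set (E × E)) ⊆ {z | l * p z.1 ≤ p (l • z.1 - z.2)} := by
    intro z hz
    obtain ⟨y, rfl⟩ := f.mem_graph_iff'.1 hz
    exact hf y
  exact closure_minimal hsub hclosed (hgf (g.mem_graph x))

theorem _root_.WithSeminorms.continuous_of_forall_le {Γ : Set (Seminorm ℝ E)}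
    (hΓ : WithSeminorms ((↑) : Γ → Seminorm ℝ E)) {f : E →ₗ[ℝ] E}
    (hf : ∀ p ∈ Γ, ∃ q ∈ Γ, ∃ C : ℝ, ∀ x, p (f x) ≤ C * q x) : Continuous f := by
  refine hΓ.continuous_of_isBounded hΓ f (Seminorm.IsBounded.of_real fun p => ?_)
  obtain ⟨q, hq, C, hC⟩ := hf p p.2
  exact ⟨{⟨q, hq⟩}, C, by simpa using hC⟩

end TopologicalVectorSpace

section Semigroup

variable {E : Type*} [AddCommGroup E] [Module ℝ E] {T : ℝ → E →ₗ[ℝ] E}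
  {g : E →ₗ.[ℝ] E}

theorem semigroup_apply_comm (hT : ∀ s u, 0 ≤ s → 0 ≤ u → T (s + u) = (T s).comp (T u))
    {s u : ℝ} (hs : 0 ≤ s) (hu : 0 ≤ u) (x : E) : T s (T u x) = T u (T s x) := by
  rw [← LinearMap.comp_apply, ← hT s u hs hu, add_comm, hT u s hu hs, LinearMap.comp_apply]

theorem seminorm_semigroup_add_le {p q : Seminorm ℝ E} {C : ℝ}
    (hC : ∀ s, 0 ≤ s → ∀ x, p (T s x) ≤ C * q x)
    (hT : ∀ s u, 0 ≤ s → 0 ≤ u → T (s + u) = (T s).comp (T u))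
    (hdiss : ∀ l, 0 < l → ∀ x : g.domain, l * p x ≤ p (l • (x : E) - g x))
    (horbit : ∀ s, 0 ≤ s → ∀ x : g.domain, ∃ hx : T s x ∈ g.domain, g ⟨T s x, hx⟩ = T s (g x))
    (x : g.domain) {u h : ℝ} (hu : 0 ≤ u) (hh : 0 < h) :
    p (T (u + h) x) ≤ p (T u x) + C * q (T h x - x - h • T h (g x)) := by
  obtain ⟨hy, hgy⟩ := horbit (u + h) (add_nonneg hu hh.le) x
  have hstep : T (u + h) x - h • T (u + h) (g x) = T u x + T u (T h x - x - h • T h (g x)) := by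
    simp only [hT u h hu hh.le, LinearMap.comp_apply, map_sub, map_smul]
    abel
  calc p (T (u + h) x) ≤ p (T (u + h) x - h • T (u + h) (g x)) :=
        Seminorm.le_sub_smul_of_inv_mul_le hh (hgy ▸ hdiss h⁻¹ (inv_pos.2 hh) ⟨_, hy⟩)
    _ ≤ p (T u x) + p (T u (T h x - x - h • T h (g x))) := hstep ▸ map_add_le_add p _ _
    _ ≤ p (T u x) + C * q (T h x - x - h • T h (g x)) := by
        gcongr
        exact hC u hu _

variable [TopologicalSpace E]

theorem semigroup_apply_mem_domain [T2Space E]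
    (hT : ∀ s u, 0 ≤ s → 0 ≤ u → T (s + u) = (T s).comp (T u))
    (hdom : ∀ x y, Tendsto (fun h : ℝ => h⁻¹ • (T h x - x)) (𝓝[>] 0) (𝓝 y) → x ∈ g.domain)
    (hlim : ∀ x : g.domain, Tendsto (fun h : ℝ => h⁻¹ • (T h x - x)) (𝓝[>] 0) (𝓝 (g x)))
    {s : ℝ} (hs : 0 ≤ s) (hTs : Continuous (T s)) (x : g.domain) :
    ∃ hx : T s x ∈ g.domain, g ⟨T s x, hx⟩ = T s (g x) := by
  have hquot : Tendsto (fun h : ℝ => h⁻¹ • (T h (T s x) - T s x)) (𝓝[>] 0) (𝓝 (T s (g x))) := by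
    refine ((hTs.tendsto _).comp (hlim x)).congr' ?_
    filter_upwards [self_mem_nhdsWithin] with h hh
    simp only [Function.comp_apply, map_smul, map_sub, semigroup_apply_comm hT hs hh.out.le]
  have hx : T s x ∈ g.domain := hdom _ _ hquot
  exact ⟨hx, tendsto_nhds_unique (hlim ⟨_, hx⟩) hquot⟩

theorem seminorm_semigroup_le_of_mem_domain [IsTopologicalAddGroup E] {p q : Seminorm ℝ E}
    (hq : Continuous q) {C : ℝ} (hC0 : 0 ≤ C) (hC : ∀ s, 0 ≤ s → ∀ x, p (T s x) ≤ C * q x)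
    (hT0 : T 0 = LinearMap.id)
    (hT : ∀ s u, 0 ≤ s → 0 ≤ u → T (s + u) = (T s).comp (T u))
    (hTcont : ∀ x, ContinuousOn (fun s => T s x) (Ici 0))
    (hdiss : ∀ l, 0 < l → ∀ x : g.domain, l * p x ≤ p (l • (x : E) - g x))
    (horbit : ∀ s, 0 ≤ s → ∀ x : g.domain, ∃ hx : T s x ∈ g.domain, g ⟨T s x, hx⟩ = T s (g x))
    (hlim : ∀ x : g.domain, Tendsto (fun h : ℝ => h⁻¹ • (T h x - x)) (𝓝[>] 0) (𝓝 (g x)))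
    (x : g.domain) {s : ℝ} (hs : 0 ≤ s) : p (T s x) ≤ p x := by
  have hq_sub : ∀ a : E, Tendsto (fun y => q (y - a)) (𝓝 a) (𝓝 0) := fun a => by
    simpa [Function.comp_def] using (hq.comp (continuous_sub_right a)).tendsto a
  have hquot : Tendsto (fun h : ℝ => q (h⁻¹ • (T h x - x) - g x)) (𝓝[>] 0) (𝓝 0) :=
    (hq_sub _).comp (hlim x)
  have hright : Tendsto (fun h : ℝ => q (T h (g x) - g x)) (𝓝[>] 0) (𝓝 0) := by
    have := (hTcont (g x) 0 self_mem_Ici).tendsto.mono_left (nhdsWithin_mono _ Ioi_subset_Ici_self)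
    simp only [hT0, LinearMap.id_apply] at this
    exact (hq_sub _).comp this
  have hδ := (hquot.add hright).const_mul C
  rw [add_zero, mul_zero] at hδ
  have hincr : ∀ u, 0 ≤ u → ∀ h, 0 < h → p (T (u + h) x) ≤
      p (T u x) + h * (C * (q (h⁻¹ • (T h x - x) - g x) + q (T h (g x) - g x))) :=
    fun u hu h hh => calc
      p (T (u + h) x) ≤ p (T u x) + C * q (T h x - x - h • T h (g x)) :=
        seminorm_semigroup_add_le hC hT hdiss horbit x hu hh
      _ ≤ p (T u x) + C * (h * (q (h⁻¹ • (T h x - x) - g x) + q (T h (g x) - g x))) := by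
        gcongr
        exact q.sub_sub_smul_le _ _ _ _ hh
      _ = _ := by ring
  simpa [hT0] using apply_le_apply_zero_of_le_add_mul hδ (φ := fun u => p (T u x)) hincr hs

theorem seminorm_semigroup_le [T2Space E] {Γ : Set (Seminorm ℝ E)}
    (hΓ : WithSeminorms ((↑) : Γ → Seminorm ℝ E)) (hT0 : T 0 = LinearMap.id)
    (hT : ∀ s u, 0 ≤ s → 0 ≤ u → T (s + u) = (T s).comp (T u))
    (hTcont : ∀ x, ContinuousOn (fun s => T s x) (Ici 0))
    (hequi : ∀ p ∈ Γ, ∃ q ∈ Γ, ∃ C : ℝ, 0 ≤ C ∧ ∀ s, 0 ≤ s → ∀ x, p (T s x) ≤ C * q x)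
    (hdom : ∀ x y, Tendsto (fun h : ℝ => h⁻¹ • (T h x - x)) (𝓝[>] 0) (𝓝 y) → x ∈ g.domain)
    (hlim : ∀ x : g.domain, Tendsto (fun h : ℝ => h⁻¹ • (T h x - x)) (𝓝[>] 0) (𝓝 (g x)))
    (hdense : Dense (g.domain : Set E))
    (hdiss : ∀ l, 0 < l → ∀ x : g.domain, ∀ p ∈ Γ, l * p x ≤ p (l • (x : E) - g x))
    {p : Seminorm ℝ E} (hp : p ∈ Γ) {s : ℝ} (hs : 0 ≤ s) (x : E) : p (T s x) ≤ p x := by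
  have := hΓ.topologicalAddGroup
  have hcont : ∀ p ∈ Γ, Continuous p := fun p hp => hΓ.continuous_seminorm ⟨p, hp⟩
  have hTs : ∀ s, 0 ≤ s → Continuous (T s) := fun s hs =>
    hΓ.continuous_of_forall_le fun p hp =>
      let ⟨q, hq, C, _, hC⟩ := hequi p hp
      ⟨q, hq, C, hC s hs⟩
  obtain ⟨q, hq, C, hC0, hC⟩ := hequi p hp
  have hdomain : ∀ y : g.domain, p (T s y) ≤ p y :=
    fun y => seminorm_semigroup_le_of_mem_domain (hcont q hq) hC0 hC hT0 hT hTcont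
      (fun l hl y => hdiss l hl y p hp)
      (fun s hs => semigroup_apply_mem_domain hT hdom hlim hs (hTs s hs)) hlim y hs
  have hclosed : IsClosed {y | p (T s y) ≤ p y} :=
    isClosed_le ((hcont p hp).comp (hTs s hs)) (hcont p hp)
  exact hclosed.closure_subset_iff.2 (fun y hy => hdomain ⟨y, hy⟩) (hdense x)

end Semigroup

section Normed

variable [NormedAddCommGroup X] [NormedSpace ℝ X] {Γ : Set (Seminorm ℝ X)}

theorem NormingSeminorms.le_norm (hΓ : NormingSeminorms Γ) {p : Seminorm ℝ X} (hp : p ∈ Γ)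
    (x : X) : p x ≤ ‖x‖ := by
  by_cases hb : BddAbove (range fun q : Γ => (q : Seminorm ℝ X) x)
  · rw [hΓ x]
    exact le_ciSup hb ⟨p, hp⟩
  · have hx : x = 0 := by rw [← norm_eq_zero, hΓ x, Real.iSup_of_not_bddAbove hb]
    simp [hx]

theorem NormingSeminorms.norm_le_norm (hΓ : NormingSeminorms Γ) {x y : X}
    (h : ∀ p ∈ Γ, p y ≤ p x) : ‖y‖ ≤ ‖x‖ := by
  rw [hΓ y]
  exact Real.iSup_le (fun p => (h p p.2).trans (hΓ.le_norm p.2 x)) (norm_nonneg x)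

theorem NormingSeminorms.exists_ne_zero (hΓ : NormingSeminorms Γ) {x : X} (hx : x ≠ 0) :
    ∃ p : Γ, (p : Seminorm ℝ X) x ≠ 0 := by
  by_contra! h
  exact hx (norm_eq_zero.1 (by simp [hΓ x, h]))

theorem GeneratesTop.withSeminorms {t : TopologicalSpace X} (h : GeneratesTop Γ t) :
    WithSeminorms (topology := t) ((↑) : Γ → Seminorm ℝ X) := by
  have : @IsTopologicalAddGroup X t _ := by
    rw [h.2]
    exact topologicalAddGroup_iInf fun p => by
      let := (p : Seminorm ℝ X).toSeminormedAddCommGroup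
      infer_instance
  exact (SeminormFamily.withSeminorms_iff_topologicalSpace_eq_iInf (t := t) _).2 h.2

theorem graphSet_eq_graph (D : Submodule ℝ X) (A : D →ₗ[ℝ] X) :
    graphSet D A = ((⟨D, A⟩ : X →ₗ.[ℝ] X).graph : Set (X × X)) := by
  ext z
  simp only [graphSet, mem_ofPred_eq, SetLike.mem_coe, LinearPMap.mem_graph_iff']
  exact exists_congr fun x => eq_comm

theorem extensionOp_iff_le {D D' : Submodule ℝ X} {A : D →ₗ[ℝ] X} {A' : D' →ₗ[ℝ] X} :
    ExtensionOp D A D' A' ↔ (⟨D, A⟩ : X →ₗ.[ℝ] X) ≤ ⟨D', A'⟩ := by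
  refine ⟨fun ⟨hle, hA⟩ => ⟨hle, fun x y hxy => ?_⟩, fun h => ⟨h.1, fun x => (h.2 rfl).symm⟩⟩
  change A x = A' y
  rw [← hA x]
  exact congrArg A' (Subtype.ext hxy)

end Normed

namespace Statements

open LumerPhillips Filter Topology Set

variable {X : Type*}

theorem statement10_general [NormedAddCommGroup X] [NormedSpace ℝ X]
    (γ : TopologicalSpace X) (Γγ : Set (Seminorm ℝ X))
    (hgen : GeneratesTop Γγ γ) (hnorm : NormingSeminorms Γγ)
    (D : Submodule ℝ X) (A : D →ₗ[ℝ] X)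
    (hdense : @Dense X γ (D : Set X))
    (hdiss : GammaDissipative Γγ D A) :
    ∀ (D' : Submodule ℝ X) (A' : D' →ₗ[ℝ] X) (T : ℝ → X →ₗ[ℝ] X),
      IsClosureOp γ D A D' A' → IsSemigroupOn γ T → EquicontOn Γγ T →
      IsGeneratorLC γ T D' A' → ContractionSG T := by
  rintro D' A' T ⟨hext, hclosed, hmin⟩ ⟨hT0, hT, hTcont⟩ hequi ⟨hdom, hlim⟩ s hs x
  -- from here on, instance arguments see `γ` rather than the norm topology
  let := γ
  have hΓ := hgen.withSeminorms
  have := hΓ.topologicalAddGroup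
  have := hΓ.continuousSMul
  have : T1Space X := hΓ.T1_of_separating fun _ => hnorm.exists_ne_zero
  rw [extensionOp_iff_le] at hext
  have hgraph := LinearPMap.graph_eq_topologicalClosure_of_isLeast hext
    (by rwa [ClosedOp, graphSet_eq_graph] at hclosed) fun h hfh hh =>
      extensionOp_iff_le.1 (hmin h.domain h.toFun (extensionOp_iff_le.2 hfh)
        (by rwa [ClosedOp, graphSet_eq_graph]))
  refine hnorm.norm_le_norm fun p hp => seminorm_semigroup_le hΓ hT0 hT hTcont hequi
    (g := ⟨D', A'⟩) (fun x y hy => (hdom x).2 ⟨y, hy⟩) hlim (hdense.mono hext.1)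
    (fun l hl x p hp => LinearPMap.seminorm_le_of_graph_le_topologicalClosure
      (hΓ.continuous_seminorm ⟨p, hp⟩) hgraph.le (hdiss l hl · p hp) x) hp hs x

theorem statement10 [NormedAddCommGroup X] [NormedSpace ℝ X] [CompleteSpace X]
    (τ γ : TopologicalSpace X) (Γτ Γγ : Set (Seminorm ℝ X))
    (hSaks : IsSaksSystem τ Γτ) (hmixed : IsMixedTopology τ γ) (hcomp : CompleteTop γ)
    (hdir : DirectedSeminorms Γγ) (hgen : GeneratesTop Γγ γ) (hnorm : NormingSeminorms Γγ)
    (D : Submodule ℝ X) (A : D →ₗ[ℝ] X)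
    (hdense : @Dense X γ (D : Set X))
    (hdiss : GammaDissipative Γγ D A)
    (hran : ∃ l : ℝ, 0 < l ∧ @Dense X γ (opRange D A l)) :
    ∀ (D' : Submodule ℝ X) (A' : D' →ₗ[ℝ] X) (T : ℝ → X →ₗ[ℝ] X),
      IsClosureOp γ D A D' A' → IsSemigroupOn γ T → EquicontOn Γγ T →
      IsGeneratorLC γ T D' A' → ContractionSG T :=
  statement10_general γ Γγ hgen hnorm D A hdense hdiss

end Statements

end LumerPhillips
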